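/- arXiv:0905.4812 — 3 statements merged into one kernel-verified Lean document; each statement's English description precedes it below -/
import Mathlib

section
/- Let φ₀(r,θ) = J₁(j₁ r) sin θ on the half-disk Ω_{0,+} = {(r,θ) : 0 < r < 1, 0 < θ < π}, where J₁ is the Bessel function of order 1 and j₁ its first positive zero. Then ∫_{Ω_{0,+}} (∂φ₀/∂x₂)² = (3/4) ∫_{Ω_{0,+}} |∇φ₀|². -/
/-!
Write `φ₀ = R(r) sin θ` with `R r = J₁ (j₁ r)`, and put `a = R'`, `b = R / r`. In polar
coordinates `∂φ₀/∂x₂ = (a - b) sin² θ + b` and `|∇φ₀|² = a² sin² θ + b² cos² θ`. Integrating in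
`θ` over `(0, π)` with `∫ sin⁴ = 3π/8` and `∫ sin² = ∫ cos² = π/2` turns the two sides into
`∫₀¹ ((3π/8) r (a² + b²) + (π/4) R' R) dr` and `∫₀¹ (π/2) r (a² + b²) dr`. The cross term is
`(π/8) [R²]₀¹ = 0` since `R` vanishes at `0` and `1`, which leaves the factor `3/4`. Fubini is
justified because `a` and, by the mean value theorem and `R 0 = 0`, also `b` are bounded on `(0, 1)`.
-/

open MeasureTheory Real Set

local notation "ℝ²" => EuclideanSpace ℝ (Fin 2)

theorem hasFDerivAt_norm {F : Type*} [NormedAddCommGroup F] [InnerProductSpace ℝ F] {x : F}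
    (hx : x ≠ 0) : HasFDerivAt (‖·‖) (innerSL ℝ (‖x‖⁻¹ • x)) x := by
  have h := (hasStrictFDerivAt_norm_sq x).hasFDerivAt.sqrt (by positivity)
  simp only [Real.sqrt_sq (norm_nonneg _)] at h
  refine h.congr_fderiv ?_
  ext y
  simp only [one_div, mul_inv_rev, smul_apply, coe_innerSL_apply, nsmul_eq_mul, Nat.cast_ofNat,
    smul_eq_mul, map_smul]
  field_simp

def planeEquiv : ℝ² ≃ᵐ ℝ × ℝ :=
  (MeasurableEquiv.toLp 2 (Fin 2 → ℝ)).symm.trans MeasurableEquiv.finTwoArrow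

theorem measurePreserving_planeEquiv : MeasurePreserving planeEquiv :=
  (volume_preserving_finTwoArrow ℝ).comp
    (EuclideanSpace.volume_preserving_symm_measurableEquiv_toLp (Fin 2))

noncomputable def polarPoint (r θ : ℝ) : ℝ² := planeEquiv.symm (polarCoord.symm (r, θ))

theorem polarPoint_zero (r θ : ℝ) : polarPoint r θ 0 = r * cos θ := rfl
theorem polarPoint_one (r θ : ℝ) : polarPoint r θ 1 = r * sin θ := rfl

theorem norm_polarPoint {r : ℝ} (hr : 0 ≤ r) (θ : ℝ) : ‖polarPoint r θ‖ = r := by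
  rw [EuclideanSpace.norm_eq, Fin.sum_univ_two, polarPoint_zero, polarPoint_one]
  simp only [Real.norm_eq_abs, sq_abs]
  rw [show (r * cos θ) ^ 2 + (r * sin θ) ^ 2 = r ^ 2 by
    linear_combination r ^ 2 * cos_sq_add_sin_sq θ, Real.sqrt_sq hr]

theorem measurable_polarPoint : Measurable fun q : ℝ × ℝ => polarPoint q.1 q.2 :=
  planeEquiv.symm.measurable.comp continuous_polarCoord_symm.measurable

def halfDisk : Set ℝ² := {p | ‖p‖ < 1 ∧ 0 < p 1}

theorem measurableSet_halfDisk : MeasurableSet halfDisk := by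
  unfold halfDisk
  measurability

theorem polarCoord_target_inter_preimage_halfDisk :
    polarCoord.target ∩ (fun q : ℝ × ℝ => polarPoint q.1 q.2) ⁻¹' halfDisk =
      Ioo 0 1 ×ˢ Ioo 0 π := by
  ext ⟨r, θ⟩
  simp only [polarCoord_target, halfDisk, mem_inter_iff, mem_prod, mem_preimage, mem_ofPred_eq,
    mem_Ioi, mem_Ioo, polarPoint_one]
  constructor
  · rintro ⟨⟨hr, hθ⟩, hr1, hsin⟩
    rw [norm_polarPoint hr.le] at hr1
    refine ⟨⟨hr, hr1⟩, ?_, hθ.2⟩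
    by_contra! hθ0
    have := mul_nonpos_of_nonneg_of_nonpos hr.le (sin_nonpos_of_nonpos_of_neg_pi_le hθ0 hθ.1.le)
    linarith
  · rintro ⟨⟨hr, hr1⟩, hθ0, hθπ⟩
    refine ⟨⟨hr, by linarith [pi_pos], hθπ⟩, ?_, mul_pos hr (sin_pos_of_pos_of_lt_pi hθ0 hθπ)⟩
    rwa [norm_polarPoint hr.le]

theorem setIntegral_halfDisk_eq_polar (G : ℝ² → ℝ) :
    ∫ p in halfDisk, G p = ∫ q in Ioo 0 1 ×ˢ Ioo 0 π, q.1 * G (polarPoint q.1 q.2) := by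
  rw [← integral_indicator measurableSet_halfDisk,
    ← (measurePreserving_planeEquiv.symm _).integral_comp' (halfDisk.indicator G),
    ← integral_comp_polarCoord_symm, ← polarCoord_target_inter_preimage_halfDisk,
    ← setIntegral_indicator (measurable_polarPoint measurableSet_halfDisk)]
  congr 1 with q
  change q.1 * halfDisk.indicator G (polarPoint q.1 q.2) = _
  by_cases hq : polarPoint q.1 q.2 ∈ halfDisk
  · rw [indicator_of_mem hq, indicator_of_mem (by exact hq)]
  · rw [indicator_of_notMem hq, indicator_of_notMem (by exact hq), mul_zero]

theorem setIntegral_halfDisk_eq_iterated {G : ℝ² → ℝ} (hG : Measurable G) {F : ℝ → ℝ → ℝ}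
    {C : ℝ} (hGF : ∀ r ∈ Ioo (0 : ℝ) 1, ∀ θ ∈ Ioo 0 π, G (polarPoint r θ) = F r θ)
    (hF : ∀ r ∈ Ioo (0 : ℝ) 1, ∀ θ ∈ Ioo 0 π, |F r θ| ≤ C) :
    ∫ p in halfDisk, G p = ∫ r in (0 : ℝ)..1, ∫ θ in 0..π, r * F r θ := by
  have hmeas : MeasurableSet (Ioo (0 : ℝ) 1 ×ˢ Ioo 0 π) :=
    measurableSet_Ioo.prod measurableSet_Ioo
  have hint : IntegrableOn (fun q : ℝ × ℝ => q.1 * G (polarPoint q.1 q.2))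
      (Ioo 0 1 ×ˢ Ioo 0 π) (volume.prod volume) := by
    refine Measure.integrableOn_of_bounded (M := C) ?_
      (measurable_fst.mul (hG.comp measurable_polarPoint)).aestronglyMeasurable
      ((ae_restrict_iff' hmeas).2 (.of_forall fun q ⟨hr, hθ⟩ => ?_))
    · simp [Measure.prod_prod]
    · rw [norm_mul, hGF _ hr _ hθ, norm_of_nonneg hr.1.le, Real.norm_eq_abs]
      exact (mul_le_of_le_one_left (abs_nonneg _) hr.2.le).trans (hF _ hr _ hθ)
  rw [setIntegral_halfDisk_eq_polar, Measure.volume_eq_prod, setIntegral_prod _ hint,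
    intervalIntegral.integral_of_le zero_le_one, integral_Ioc_eq_integral_Ioo]
  refine setIntegral_congr_fun measurableSet_Ioo fun r hr => ?_
  rw [intervalIntegral.integral_of_le pi_pos.le, integral_Ioc_eq_integral_Ioo]
  exact setIntegral_congr_fun measurableSet_Ioo fun θ hθ => by rw [hGF r hr θ hθ]

/-- The polar form of `(∂₂φ)² ≤ ‖∇φ‖²`. -/
theorem sq_sub_mul_sin_sq_add_le (a b θ : ℝ) :
    ((a - b) * sin θ ^ 2 + b) ^ 2 ≤ a ^ 2 * sin θ ^ 2 + b ^ 2 * cos θ ^ 2 := by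
  have h : a ^ 2 * sin θ ^ 2 + b ^ 2 * cos θ ^ 2 - ((a - b) * sin θ ^ 2 + b) ^ 2 =
      ((a - b) * sin θ * cos θ) ^ 2 := by
    linear_combination (b ^ 2 - (a - b) ^ 2 * sin θ ^ 2) * cos_sq_add_sin_sq θ
  linarith [sq_nonneg ((a - b) * sin θ * cos θ)]

theorem integral_sub_mul_sin_sq_add_sq (a b : ℝ) :
    ∫ θ in (0 : ℝ)..π, ((a - b) * sin θ ^ 2 + b) ^ 2 =
      3 * π / 8 * (a ^ 2 + b ^ 2) + π / 4 * (a * b) := by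
  have h4 : ∫ θ in (0 : ℝ)..π, sin θ ^ 4 = 3 * π / 8 := by
    have := integral_sin_pow_even (n := 2)
    norm_num [Finset.prod_range_succ] at this
    rw [this]; ring
  have hexp : ∀ θ, ((a - b) * sin θ ^ 2 + b) ^ 2 =
      (a - b) ^ 2 * sin θ ^ 4 + 2 * (a - b) * b * sin θ ^ 2 + b ^ 2 := fun θ => by ring
  simp_rw [hexp]
  rw [intervalIntegral.integral_add, intervalIntegral.integral_add,
    intervalIntegral.integral_const_mul, intervalIntegral.integral_const_mul, h4, integral_sin_sq]
  · simp only [sin_zero, cos_zero, mul_one, sin_pi, cos_pi, mul_neg, neg_zero, sub_self, zero_add,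
      sub_zero, intervalIntegral.integral_const, smul_eq_mul]
    ring
  all_goals exact Continuous.intervalIntegrable (by fun_prop) _ _

theorem integral_sq_mul_sin_sq_add_sq_mul_cos_sq (a b : ℝ) :
    ∫ θ in (0 : ℝ)..π, a ^ 2 * sin θ ^ 2 + b ^ 2 * cos θ ^ 2 = π / 2 * (a ^ 2 + b ^ 2) := by
  rw [intervalIntegral.integral_add, intervalIntegral.integral_const_mul,
    intervalIntegral.integral_const_mul, integral_sin_sq, integral_cos_sq]
  · simp only [sin_zero, cos_zero, mul_one, sin_pi, cos_pi, mul_neg, neg_zero, sub_self, zero_add,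
      sub_zero, mul_zero]
    ring
  all_goals exact Continuous.intervalIntegrable (by fun_prop) _ _

noncomputable def sinMode (R : ℝ → ℝ) (p : ℝ²) : ℝ := R ‖p‖ * (p 1 / ‖p‖)

noncomputable def sinModeGrad (R : ℝ → ℝ) (p : ℝ²) : ℝ² :=
  ((deriv R ‖p‖ - R ‖p‖ / ‖p‖) * (p 1 / ‖p‖ ^ 2)) • p +
    (R ‖p‖ / ‖p‖) • EuclideanSpace.single 1 1

section

variable {R : ℝ → ℝ}

theorem hasFDerivAt_sinMode {p : ℝ²} (hp : p ≠ 0) (hR : DifferentiableAt ℝ R ‖p‖) :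
    HasFDerivAt (sinMode R) (innerSL ℝ (sinModeGrad R p)) p := by
  have hnorm := hasFDerivAt_norm hp
  have hcoord : HasFDerivAt (fun q : ℝ² => q 1) (innerSL ℝ (EuclideanSpace.single 1 1)) p := by
    convert (innerSL ℝ (EuclideanSpace.single (1 : Fin 2) (1 : ℝ))).hasFDerivAt using 2 with q
    simp [EuclideanSpace.inner_single_left]
  have hp' : ‖p‖ ≠ 0 := norm_ne_zero_iff.mpr hp
  have h := (hR.hasDerivAt.comp_hasFDerivAt p hnorm).mul
    (hcoord.mul ((hasDerivAt_inv hp').comp_hasFDerivAt p hnorm))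
  refine (h.congr_fderiv ?_).congr_of_eventuallyEq (.of_forall fun q => ?_)
  · ext q
    simp only [sinModeGrad, Function.comp_apply, map_add, map_smul, neg_smul, smul_neg, smul_add,
      Pi.mul_apply, add_apply, neg_apply, smul_apply, coe_innerSL_apply, smul_eq_mul,
      EuclideanSpace.inner_single_left, ringHom_apply, one_mul]
    field_simp
    ring
  · simp [sinMode, div_eq_mul_inv]

theorem sinModeGrad_polarPoint_zero {r : ℝ} (hr : 0 < r) (θ : ℝ) :
    sinModeGrad R (polarPoint r θ) 0 = (deriv R r - R r / r) * (sin θ * cos θ) := by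
  simp only [sinModeGrad, norm_polarPoint hr.le, polarPoint_zero, polarPoint_one, PiLp.add_apply,
    PiLp.smul_apply, smul_eq_mul, ne_eq, zero_ne_one, not_false_eq_true, PiLp.single_eq_of_ne,
    mul_zero, add_zero]
  field_simp

theorem sinModeGrad_polarPoint_one {r : ℝ} (hr : 0 < r) (θ : ℝ) :
    sinModeGrad R (polarPoint r θ) 1 = (deriv R r - R r / r) * sin θ ^ 2 + R r / r := by
  simp only [sinModeGrad, norm_polarPoint hr.le, polarPoint_one, PiLp.add_apply, PiLp.smul_apply,
    smul_eq_mul, PiLp.single_eq_same, mul_one, add_left_inj]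
  field_simp

theorem hasFDerivAt_sinMode_polarPoint {r : ℝ} (hR : DifferentiableAt ℝ R r)
    (hr : 0 < r) (θ : ℝ) :
    HasFDerivAt (sinMode R) (innerSL ℝ (sinModeGrad R (polarPoint r θ))) (polarPoint r θ) := by
  refine hasFDerivAt_sinMode (fun h => hr.ne' ?_) (by rwa [norm_polarPoint hr.le])
  rw [← norm_polarPoint hr.le θ, h, norm_zero]

theorem fderiv_sinMode_polarPoint_single {r : ℝ} (hR : DifferentiableAt ℝ R r)
    (hr : 0 < r) (θ : ℝ) :
    fderiv ℝ (sinMode R) (polarPoint r θ) (EuclideanSpace.single 1 1) =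
      (deriv R r - R r / r) * sin θ ^ 2 + R r / r := by
  rw [(hasFDerivAt_sinMode_polarPoint hR hr θ).fderiv, innerSL_apply_apply,
    EuclideanSpace.inner_single_right, sinModeGrad_polarPoint_one hr]
  simp

theorem norm_fderiv_sinMode_polarPoint_sq {r : ℝ} (hR : DifferentiableAt ℝ R r)
    (hr : 0 < r) (θ : ℝ) :
    ‖fderiv ℝ (sinMode R) (polarPoint r θ)‖ ^ 2 =
      deriv R r ^ 2 * sin θ ^ 2 + (R r / r) ^ 2 * cos θ ^ 2 := by
  rw [(hasFDerivAt_sinMode_polarPoint hR hr θ).fderiv, innerSL_apply_norm,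
    EuclideanSpace.norm_sq_eq, Fin.sum_univ_two, Real.norm_eq_abs, Real.norm_eq_abs, sq_abs, sq_abs,
    sinModeGrad_polarPoint_zero hr, sinModeGrad_polarPoint_one hr]
  linear_combination ((deriv R r - R r / r) ^ 2 * sin θ ^ 2 - (R r / r) ^ 2) * sin_sq_add_cos_sq θ

theorem exists_sq_bound_deriv_and_div (hR : ContDiff ℝ 1 R) (hR0 : R 0 = 0) :
    ∃ M, ∀ r ∈ Ioc (0 : ℝ) 1, deriv R r ^ 2 ≤ M ∧ (R r / r) ^ 2 ≤ M := by
  obtain ⟨M, hM⟩ := isCompact_Icc.exists_bound_of_continuousOn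
    (hR.continuous_deriv le_rfl).continuousOn (s := Icc (0 : ℝ) 1)
  refine ⟨M ^ 2, fun r hr => ⟨sq_le_sq.2 ((hM r (Ioc_subset_Icc_self hr)).trans (le_abs_self M)),
    sq_le_sq.2 ((abs_div _ _).trans_le ?_)⟩⟩
  have hmvt := norm_image_sub_le_of_norm_deriv_le_segment'
    (fun x _ => (hR.differentiable one_ne_zero x).hasDerivAt.hasDerivWithinAt)
    (fun x hx => hM x (Ico_subset_Icc_self hx)) r (Ioc_subset_Icc_self hr)
  rw [hR0, sub_zero, sub_zero, Real.norm_eq_abs] at hmvt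
  rw [abs_of_pos hr.1, div_le_iff₀ hr.1]
  exact hmvt.trans (mul_le_mul_of_nonneg_right (le_abs_self M) hr.1.le)

theorem intervalIntegrable_mul_deriv_sq_add_div_sq (hR : ContDiff ℝ 1 R) (hR0 : R 0 = 0) :
    IntervalIntegrable (fun r => r * (deriv R r ^ 2 + (R r / r) ^ 2)) volume 0 1 := by
  obtain ⟨M, hM⟩ := exists_sq_bound_deriv_and_div hR hR0
  rw [intervalIntegrable_iff_integrableOn_Ioc_of_le zero_le_one]
  refine Measure.integrableOn_of_bounded (M := M + M) (by simp)
    (measurable_id.mul (((measurable_deriv R).pow_const 2).add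
      ((hR.continuous.measurable.div measurable_id).pow_const 2))).aestronglyMeasurable
    ((ae_restrict_iff' measurableSet_Ioc).2 (.of_forall fun r hr => ?_))
  obtain ⟨ha, hb⟩ := hM r hr
  rw [Real.norm_eq_abs, abs_mul, abs_of_pos hr.1, abs_of_nonneg (by positivity)]
  nlinarith [hr.1, hr.2]

theorem integral_deriv_mul_self (hR : ContDiff ℝ 1 R) (a b : ℝ) :
    ∫ x in a..b, deriv R x * R x = (R b ^ 2 - R a ^ 2) / 2 := by
  have hd : ∀ x, HasDerivAt (fun x => R x ^ 2 / 2) (deriv R x * R x) x := fun x => by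
    have h := (hR.differentiable one_ne_zero x).hasDerivAt
    exact ((h.mul h).div_const 2).congr_deriv (by ring) |>.congr_of_eventuallyEq
      (.of_forall fun y => by simp only [Pi.mul_apply]; ring)
  rw [intervalIntegral.integral_eq_sub_of_hasDerivAt (fun x _ => hd x)
    (((hR.continuous_deriv le_rfl).mul hR.continuous).intervalIntegrable _ _)]
  ring

theorem integral_fderiv_sinMode_single_sq (hR : ContDiff ℝ 1 R) (hR0 : R 0 = 0)
    (hR1 : R 1 = 0) :
    ∫ p in halfDisk, fderiv ℝ (sinMode R) p (EuclideanSpace.single 1 1) ^ 2 =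
      3 / 4 * ∫ p in halfDisk, ‖fderiv ℝ (sinMode R) p‖ ^ 2 := by
  obtain ⟨M, hM⟩ := exists_sq_bound_deriv_and_div hR hR0
  have hdiff : Differentiable ℝ R := hR.differentiable one_ne_zero
  have hgrad_le : ∀ r ∈ Ioo (0 : ℝ) 1, ∀ θ : ℝ,
      |deriv R r ^ 2 * sin θ ^ 2 + (R r / r) ^ 2 * cos θ ^ 2| ≤ M := fun r hr θ => by
    obtain ⟨ha, hb⟩ := hM r (Ioo_subset_Ioc_self hr)
    rw [abs_of_nonneg (by positivity)]
    nlinarith [sin_sq_add_cos_sq θ, sq_nonneg (sin θ), sq_nonneg (cos θ)]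
  set P : ℝ → ℝ := fun r => r * (deriv R r ^ 2 + (R r / r) ^ 2)
  have hmul_div : ∀ r, r * (R r / r) = R r := fun r => by
    rcases eq_or_ne r 0 with rfl | hr
    · simp [hR0]
    · field_simp
  have hlhs : ∫ p in halfDisk, fderiv ℝ (sinMode R) p (EuclideanSpace.single 1 1) ^ 2 =
      ∫ r in (0 : ℝ)..1, (3 * π / 8 * P r + π / 4 * (deriv R r * R r)) := by
    rw [setIntegral_halfDisk_eq_iterated ((measurable_fderiv_apply_const ℝ _ _).pow_const 2)
      (fun r hr θ _ => by rw [fderiv_sinMode_polarPoint_single (hdiff r) hr.1])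
      (fun r hr θ _ => (abs_of_nonneg (sq_nonneg _)).trans_le
        ((sq_sub_mul_sin_sq_add_le _ _ θ).trans ((le_abs_self _).trans (hgrad_le r hr θ))))]
    refine intervalIntegral.integral_congr fun r _ => ?_
    rw [intervalIntegral.integral_const_mul, integral_sub_mul_sin_sq_add_sq]
    linear_combination π / 4 * deriv R r * hmul_div r
  have hrhs : ∫ p in halfDisk, ‖fderiv ℝ (sinMode R) p‖ ^ 2 =
      ∫ r in (0 : ℝ)..1, π / 2 * P r := by
    rw [setIntegral_halfDisk_eq_iterated ((measurable_fderiv ℝ _).norm.pow_const 2)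
      (fun r hr θ _ => by rw [norm_fderiv_sinMode_polarPoint_sq (hdiff r) hr.1])
      (fun r hr θ _ => hgrad_le r hr θ)]
    refine intervalIntegral.integral_congr fun r _ => ?_
    rw [intervalIntegral.integral_const_mul, integral_sq_mul_sin_sq_add_sq_mul_cos_sq]
    ring
  have hRR' : IntervalIntegrable (fun r => deriv R r * R r) volume 0 1 :=
    ((hR.continuous_deriv le_rfl).mul hR.continuous).intervalIntegrable _ _
  rw [hlhs, hrhs, intervalIntegral.integral_add
    ((intervalIntegrable_mul_deriv_sq_add_div_sq hR hR0).const_mul _) (hRR'.const_mul _),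
    intervalIntegral.integral_const_mul, intervalIntegral.integral_const_mul,
    intervalIntegral.integral_const_mul, integral_deriv_mul_self hR, hR0, hR1]
  ring

end

theorem stmt_6_general (J1 : ℝ → ℝ) (j1 : ℝ)
    (hJ : ContDiff ℝ 1 J1) (hJ0 : J1 0 = 0) (hJz : J1 j1 = 0)
    (φ : EuclideanSpace ℝ (Fin 2) → ℝ)
    (hφ : ∀ p : EuclideanSpace ℝ (Fin 2), φ p = J1 (j1 * ‖p‖) * (p 1 / ‖p‖))
    (Ωp : Set (EuclideanSpace ℝ (Fin 2)))
    (hΩp : Ωp = {p : EuclideanSpace ℝ (Fin 2) | ‖p‖ < 1 ∧ 0 < p 1}) :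
    ∫ p in Ωp, (fderiv ℝ φ p (EuclideanSpace.single 1 1)) ^ 2 ∂volume
      = (3 / 4) * ∫ p in Ωp, ‖fderiv ℝ φ p‖ ^ 2 ∂volume := by
  obtain rfl : φ = sinMode fun r => J1 (j1 * r) := funext hφ
  subst hΩp
  exact integral_fderiv_sinMode_single_sq (hJ.comp (contDiff_const.mul contDiff_id))
    (by simpa using hJ0) (by simpa using hJz)

/-- For `φ₀(r,θ) = J₁(j₁ r) sin θ` on the half-disk (with `J₁` vanishing at `0` and at its
first positive zero `j₁`), the integral of `(∂φ₀/∂x₂)²` equals `3/4` of the Dirichlet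
integral of `φ₀`. -/
theorem stmt_6 (J1 : ℝ → ℝ) (j1 : ℝ) (hj1 : 0 < j1)
    (hJ : ContDiff ℝ 1 J1) (hJ0 : J1 0 = 0) (hJz : J1 j1 = 0)
    (hfirst : ∀ x : ℝ, 0 < x → x < j1 → J1 x ≠ 0)
    (φ : EuclideanSpace ℝ (Fin 2) → ℝ)
    (hφ : ∀ p : EuclideanSpace ℝ (Fin 2), φ p = J1 (j1 * ‖p‖) * (p 1 / ‖p‖))
    (Ωp : Set (EuclideanSpace ℝ (Fin 2)))
    (hΩp : Ωp = {p : EuclideanSpace ℝ (Fin 2) | ‖p‖ < 1 ∧ 0 < p 1}) :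
    ∫ p in Ωp, (fderiv ℝ φ p (EuclideanSpace.single 1 1)) ^ 2 ∂volume
      = (3 / 4) * ∫ p in Ωp, ‖fderiv ℝ φ p‖ ^ 2 ∂volume :=
  stmt_6_general J1 j1 hJ hJ0 hJz φ hφ Ωp hΩp
end

section
/- Suppose Ω_{m,k} is a minimiser of inf{λ_k(Ω) : Ω open in ℝ^m, |Ω| < ∞, H^{m-1}(∂Ω) ≤ 1}. Then Ω*_{m,k} := int(closure(Ω_{m,k})) is also a minimiser: it is open, satisfies H^{m-1}(∂Ω*_{m,k}) ≤ 1, |Ω*_{m,k}| < ∞, and λ_k(Ω*_{m,k}) = λ_k(Ω_{m,k}). -/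
open MeasureTheory

/-!
Since `Ω ⊆ Ω*`, domain monotonicity gives `λ_k(Ω*) ≤ λ_k(Ω)`, and minimality of `Ω` gives the
reverse as soon as `Ω*` is admissible. It is: `∂Ω* ⊆ ∂Ω`, and `Ω* ⊆ Ω ∪ ∂Ω` where `∂Ω` is
Lebesgue-null because its `H^{m-1}` measure is finite.
-/

theorem IsOpen.frontier_interior_closure_subset {X : Type*} [TopologicalSpace X] {s : Set X}
    (hs : IsOpen s) : frontier (interior (closure s)) ⊆ frontier s := by
  rw [frontier, frontier, interior_interior, hs.interior_eq]
  exact Set.sdiff_subset_sdiff (closure_minimal interior_subset isClosed_closure)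
    (interior_maximal subset_closure hs)

theorem MeasureTheory.Measure.addHaar_eq_zero_of_hausdorffMeasure_finrank_sub_one_ne_top
    {E : Type*} [NormedAddCommGroup E] [NormedSpace ℝ E] [FiniteDimensional ℝ E]
    [MeasurableSpace E] [BorelSpace E] (μ : Measure E) [μ.IsAddHaarMeasure] {s : Set E}
    (hs : μH[(Module.finrank ℝ E : ℝ) - 1] s ≠ ⊤) : μ s = 0 := by
  have hzero : μH[(Module.finrank ℝ E : ℝ)] s = 0 :=
    (Measure.hausdorffMeasure_zero_or_top (sub_one_lt _) s).resolve_right hs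
  exact Measure.absolutelyContinuous_isAddHaarMeasure μ μH[Module.finrank ℝ E] hzero

theorem volume_interior_closure_lt_top {m : ℕ} {s : Set (EuclideanSpace ℝ (Fin m))}
    (hvol : volume s < ⊤) (hH : μH[(m : ℝ) - 1] (frontier s) ≠ ⊤) :
    volume (interior (closure s)) < ⊤ := by
  have hfrontier : volume (frontier s) = 0 :=
    Measure.addHaar_eq_zero_of_hausdorffMeasure_finrank_sub_one_ne_top volume
      (by simpa using hH)
  calc volume (interior (closure s)) ≤ volume (s ∪ frontier s) := by
        rw [← closure_eq_self_union_frontier]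
        exact measure_mono interior_subset
    _ ≤ volume s + volume (frontier s) := measure_union_le _ _
    _ < ⊤ := by rwa [hfrontier, add_zero]

theorem stmt_10_general (m : ℕ)
    (lamk : Set (EuclideanSpace ℝ (Fin m)) → ℝ)
    (hmono : ∀ A B : Set (EuclideanSpace ℝ (Fin m)), A ⊆ B → lamk B ≤ lamk A)
    (Ω : Set (EuclideanSpace ℝ (Fin m)))
    (hΩ : IsOpen Ω) (hvol : volume Ω < ⊤) (hH : μH[(m : ℝ) - 1] (frontier Ω) ≤ 1)
    (hmin : ∀ U : Set (EuclideanSpace ℝ (Fin m)), IsOpen U → volume U < ⊤ →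
      μH[(m : ℝ) - 1] (frontier U) ≤ 1 → lamk Ω ≤ lamk U) :
    IsOpen (interior (closure Ω)) ∧
    μH[(m : ℝ) - 1] (frontier (interior (closure Ω))) ≤ 1 ∧
    volume (interior (closure Ω)) < ⊤ ∧
    lamk (interior (closure Ω)) = lamk Ω ∧
    (∀ U : Set (EuclideanSpace ℝ (Fin m)), IsOpen U → volume U < ⊤ →
      μH[(m : ℝ) - 1] (frontier U) ≤ 1 → lamk (interior (closure Ω)) ≤ lamk U) := by
  have hH' : μH[(m : ℝ) - 1] (frontier (interior (closure Ω))) ≤ 1 :=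
    (measure_mono hΩ.frontier_interior_closure_subset).trans hH
  have hvol' : volume (interior (closure Ω)) < ⊤ :=
    volume_interior_closure_lt_top hvol (hH.trans_lt ENNReal.one_lt_top).ne
  have heq : lamk (interior (closure Ω)) = lamk Ω :=
    le_antisymm (hmono _ _ (interior_maximal subset_closure hΩ))
      (hmin _ isOpen_interior hvol' hH')
  exact ⟨isOpen_interior, hH', hvol', heq, heq ▸ hmin⟩

/-- If `Ω` minimises the `k`-th Dirichlet eigenvalue `lamk` among open sets of finite
measure with `H^{m-1}(∂Ω) ≤ 1`, then `Ω* = int(closure Ω)` is also a minimiser: it is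
open, admissible, and `lamk Ω* = lamk Ω`.  Here `lamk` is assumed to satisfy domain
monotonicity. -/
theorem stmt_10 (m k : ℕ) (hm : 2 ≤ m)
    (lamk : Set (EuclideanSpace ℝ (Fin m)) → ℝ)
    (hmono : ∀ A B : Set (EuclideanSpace ℝ (Fin m)), A ⊆ B → lamk B ≤ lamk A)
    (Ω : Set (EuclideanSpace ℝ (Fin m)))
    (hΩ : IsOpen Ω) (hvol : volume Ω < ⊤) (hH : μH[(m : ℝ) - 1] (frontier Ω) ≤ 1)
    (hmin : ∀ U : Set (EuclideanSpace ℝ (Fin m)), IsOpen U → volume U < ⊤ →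
      μH[(m : ℝ) - 1] (frontier U) ≤ 1 → lamk Ω ≤ lamk U) :
    IsOpen (interior (closure Ω)) ∧
    μH[(m : ℝ) - 1] (frontier (interior (closure Ω))) ≤ 1 ∧
    volume (interior (closure Ω)) < ⊤ ∧
    lamk (interior (closure Ω)) = lamk Ω ∧
    (∀ U : Set (EuclideanSpace ℝ (Fin m)), IsOpen U → volume U < ⊤ →
      μH[(m : ℝ) - 1] (frontier U) ≤ 1 → lamk (interior (closure Ω)) ≤ lamk U) :=
  stmt_10_general m lamk hmono Ω hΩ hvol hH hmin
end

section
/- Let k ≥ 3, m ≥ 3, and suppose Ω_{m,k} minimises inf{λ_k(Ω) : Ω open in ℝ^m, |Ω| < ∞, H^{m-1}(∂Ω) ≤ 1} with ω components, where at most one component supports only one eigenvalue ≤ λ_k(Ω_{m,k}) and all others support at least two. Then λ_k(B_m) ≥ λ₁(B_m)·(1 + (ω-1)·2^{(m-1)/m})^{2/(m-1)}; equivalently ω ≤ 1 + ⌊2^{-(m-1)/m}((λ_k(B_m)/λ₁(B_m))^{(m-1)/2} − 1)⌋. -/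
/-- Bound on the number `ω` of components of a minimiser of the `k`-th Dirichlet
eigenvalue under the Hausdorff boundary measure constraint.  `a` is the boundary measure
of the (at most one) component supporting one eigenvalue, `b i` those of the remaining
components (each supporting at least two eigenvalues); `HB = H^{m-1}(∂B_m)`,
`lam1B = λ₁(B_m)`, `lamkB = λ_k(B_m)`, and `lamkstar` is the infimum.  Hypotheses
`h1`, `h2`, `h3` are the Faber–Krahn bound, the Krahn–Szegő bound, and the trial-domain
upper bound.  Conclusion: `λ_k(B_m) ≥ λ₁(B_m)(1+(ω-1)2^{(m-1)/m})^{2/(m-1)}`,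
equivalently `ω ≤ 1 + ⌊2^{-(m-1)/m}((λ_k(B_m)/λ₁(B_m))^{(m-1)/2} - 1)⌋`. -/
theorem stmt_15 (m k ω : ℕ) (hm : 3 ≤ m) (hk : 3 ≤ k) (hω : 2 ≤ ω)
    (lam1B lamkB lamkstar HB a : ℝ)
    (hlam1B : 0 < lam1B) (hHB : 0 < HB) (ha : 0 < a)
    (b : Fin (ω - 1) → ℝ) (hb : ∀ i, 0 < b i)
    (hsum : a + ∑ i, b i ≤ 1)
    (h1 : lamkstar ≥ lam1B * (HB / a) ^ ((2 : ℝ) / ((m : ℝ) - 1)))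
    (h2 : ∀ i, lamkstar ≥ 2 ^ ((2 : ℝ) / m) * lam1B * (HB / b i) ^ ((2 : ℝ) / ((m : ℝ) - 1)))
    (h3 : lamkstar ≤ lamkB * HB ^ ((2 : ℝ) / ((m : ℝ) - 1))) :
    lamkB ≥ lam1B * (1 + ((ω : ℝ) - 1) * 2 ^ (((m : ℝ) - 1) / m)) ^ ((2 : ℝ) / ((m : ℝ) - 1)) ∧
    (ω : ℤ) ≤ 1 + ⌊2 ^ (-(((m : ℝ) - 1) / m)) * ((lamkB / lam1B) ^ (((m : ℝ) - 1) / 2) - 1)⌋ := by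
  have hm3 : (3 : ℝ) ≤ (m : ℝ) := by exact_mod_cast hm
  have hm1 : (0 : ℝ) < (m : ℝ) - 1 := by linarith
  have hmpos : (0 : ℝ) < (m : ℝ) := by linarith
  set p : ℝ := 2 / ((m : ℝ) - 1) with hp
  set e : ℝ := ((m : ℝ) - 1) / 2 with he
  set q : ℝ := ((m : ℝ) - 1) / (m : ℝ) with hq
  have hppos : 0 < p := by positivity
  have hepos : 0 < e := by positivity
  have hpe : p * e = 1 := by
    rw [hp, he]; field_simp
  have hstar : 0 < lamkstar := lt_of_lt_of_le (by positivity) h1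
  set r : ℝ := lamkstar / lam1B with hr
  have hrpos : 0 < r := by positivity
  set t : ℝ := r ^ e with ht
  have htpos : 0 < t := Real.rpow_pos_of_pos hrpos e
  have h2q : (0 : ℝ) < (2 : ℝ) ^ q := Real.rpow_pos_of_pos two_pos q
  have hω1 : (1 : ℝ) ≤ (ω : ℝ) - 1 := by
    have : (2 : ℝ) ≤ (ω : ℝ) := by exact_mod_cast hω
    linarith
  -- bound on a
  have hA : HB / t ≤ a := by
    have h1' : (HB / a) ^ p ≤ r := by
      rw [hr, le_div_iff₀ hlam1B]
      calc (HB / a) ^ p * lam1B = lam1B * (HB / a) ^ p := by ring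
        _ ≤ lamkstar := h1
    have h2' : ((HB / a) ^ p) ^ e ≤ r ^ e :=
      Real.rpow_le_rpow (by positivity) h1' hepos.le
    rw [← Real.rpow_mul (by positivity), hpe, Real.rpow_one] at h2'
    rw [div_le_iff₀ ha] at h2'
    rw [div_le_iff₀ htpos]
    linarith [h2']
  -- bound on each b i
  have hB : ∀ i, HB * (2 : ℝ) ^ q / t ≤ b i := by
    intro i
    have hbi := hb i
    have h2m : (0 : ℝ) < (2 : ℝ) ^ ((2 : ℝ) / (m : ℝ)) := Real.rpow_pos_of_pos two_pos _
    have h1' : (HB / b i) ^ p ≤ r / (2 : ℝ) ^ ((2 : ℝ) / (m : ℝ)) := by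
      rw [hr, div_div, le_div_iff₀ (by positivity)]
      calc (HB / b i) ^ p * (lam1B * (2 : ℝ) ^ ((2 : ℝ) / (m : ℝ)))
          = (2 : ℝ) ^ ((2 : ℝ) / (m : ℝ)) * lam1B * (HB / b i) ^ p := by ring
        _ ≤ lamkstar := h2 i
    have h2' : ((HB / b i) ^ p) ^ e ≤ (r / (2 : ℝ) ^ ((2 : ℝ) / (m : ℝ))) ^ e :=
      Real.rpow_le_rpow (by positivity) h1' hepos.le
    rw [← Real.rpow_mul (by positivity), hpe, Real.rpow_one,
      Real.div_rpow hrpos.le h2m.le, ← Real.rpow_mul (by norm_num)] at h2'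
    have hexp : (2 : ℝ) / (m : ℝ) * e = q := by
      rw [he, hq]; field_simp
    rw [hexp] at h2'
    -- h2' : HB / b i ≤ t / 2 ^ q
    rw [div_le_div_iff₀ hbi h2q] at h2'
    rw [div_le_iff₀ htpos]
    nlinarith [h2']
  -- sum bound
  set S : ℝ := 1 + ((ω : ℝ) - 1) * (2 : ℝ) ^ q with hS
  have hSpos : 0 < S := by positivity
  have hsumb : ((ω : ℝ) - 1) * (HB * (2 : ℝ) ^ q / t) ≤ ∑ i, b i := by
    have this : ∑ _i : Fin (ω - 1), HB * (2 : ℝ) ^ q / t ≤ ∑ i, b i :=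
      Finset.sum_le_sum (fun i _ => hB i)
    rw [Finset.sum_const, Finset.card_univ, Fintype.card_fin, nsmul_eq_mul] at this
    have hc : ((ω - 1 : ℕ) : ℝ) = (ω : ℝ) - 1 := by
      have : 1 ≤ ω := by omega
      push_cast [this]; ring
    rwa [hc] at this
  have hHS : HB * S ≤ t := by
    have hle : HB / t + ((ω : ℝ) - 1) * (HB * (2 : ℝ) ^ q / t) ≤ 1 := by
      calc HB / t + ((ω : ℝ) - 1) * (HB * (2 : ℝ) ^ q / t)
          ≤ a + ∑ i, b i := add_le_add hA hsumb
        _ ≤ 1 := hsum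
    rw [← div_le_one htpos]
    calc HB * S / t = HB / t + ((ω : ℝ) - 1) * (HB * (2 : ℝ) ^ q / t) := by
          rw [hS]; field_simp
      _ ≤ 1 := hle
  -- raise to power p
  have hrS : (HB * S) ^ p ≤ r := by
    have := Real.rpow_le_rpow (by positivity) hHS hppos.le
    rwa [ht, ← Real.rpow_mul hrpos.le, mul_comm e p, hpe, Real.rpow_one] at this
  have hmain : lam1B * S ^ p ≤ lamkB := by
    have h4 : lam1B * (HB ^ p * S ^ p) ≤ lamkstar := by
      rw [← Real.mul_rpow hHB.le hSpos.le]
      rw [hr, le_div_iff₀ hlam1B] at hrS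
      linarith [hrS]
    have h5 : lam1B * (HB ^ p * S ^ p) ≤ lamkB * HB ^ p := le_trans h4 h3
    have hHBp : (0 : ℝ) < HB ^ p := Real.rpow_pos_of_pos hHB p
    nlinarith [h5]
  refine ⟨hmain, ?_⟩
  -- second conclusion
  have hX : S ≤ (lamkB / lam1B) ^ e := by
    have h6 : S ^ p ≤ lamkB / lam1B := by
      rw [le_div_iff₀ hlam1B]; linarith [hmain]
    have := Real.rpow_le_rpow (by positivity) h6 hepos.le
    rwa [← Real.rpow_mul hSpos.le, hpe, Real.rpow_one] at this
  rw [← sub_le_iff_le_add']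
  refine Int.le_floor.mpr ?_
  have hneg : (2 : ℝ) ^ (-q) = ((2 : ℝ) ^ q)⁻¹ := Real.rpow_neg (by norm_num) q
  rw [hneg]
  push_cast
  have hkey : ((2 : ℝ) ^ q)⁻¹ * (((ω : ℝ) - 1) * (2 : ℝ) ^ q) = (ω : ℝ) - 1 := by
    field_simp
  have hge : ((ω : ℝ) - 1) * (2 : ℝ) ^ q ≤ (lamkB / lam1B) ^ e - 1 := by
    rw [hS] at hX; linarith
  have := mul_le_mul_of_nonneg_left hge (inv_nonneg.mpr h2q.le)
  rw [hkey] at this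
  linarith
end
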